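/- arXiv:2412.02134 — 2 statements merged into one kernel-verified Lean document; each statement's English description precedes it below -/
import Mathlib

section
/- Let ρ be a density matrix and σ a density matrix on ℂ^d, let S be the swap operator on ℂ^d ⊗ ℂ^d, and let Δ be real. Then Tr₂[e^{-iΔS}(ρ ⊗ σ)e^{iΔS}] = cos²(Δ)·ρ - i·sin(Δ)cos(Δ)·[σ, ρ] + sin²(Δ)·σ. -/
open scoped ComplexOrder Kronecker

/-- The swap operator `S = ∑_{i,j} |i⟩⟨j| ⊗ |j⟩⟨i|` on `ℂ^d ⊗ ℂ^d`. -/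
def swapOp (d : ℕ) : Matrix (Fin d × Fin d) (Fin d × Fin d) ℂ :=
  Matrix.of fun p q => if p.1 = q.2 ∧ p.2 = q.1 then 1 else 0

/-- Partial trace over the second tensor factor. -/
noncomputable def ptrace2 {a b : Type*} [Fintype b]
    (M : Matrix (a × b) (a × b) ℂ) : Matrix a a ℂ :=
  Matrix.of fun i j => ∑ k, M (i, k) (j, k)

/-! Since `S * S = 1`, the exponential series splits into even and odd parts and
`exp (-iΔS) = cos Δ - i sin Δ • S`. Conjugating `ρ ⊗ σ` then gives four terms, whose
partial traces are `Tr σ • ρ`, `σ * ρ`, `ρ * σ` and `Tr ρ • σ`: the swap moves `σ` into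
the traced-out factor. -/

open Nat in
theorem NormedSpace.exp_smul_of_mul_self_eq_one {A : Type*} [Ring A] [Algebra ℂ A]
    [TopologicalSpace A] [IsTopologicalRing A] [T2Space A] [ContinuousSMul ℂ A] {S : A}
    (hS : S * S = 1) (z : ℂ) :
    NormedSpace.exp (z • S) = Complex.cosh z • (1 : A) + Complex.sinh z • S := by
  have hS_even (n : ℕ) : S ^ (2 * n) = 1 := by rw [pow_mul, sq, hS, one_pow]
  have hS_odd (n : ℕ) : S ^ (2 * n + 1) = S := by rw [pow_succ, hS_even, one_mul]
  have hterm (n : ℕ) : ((n ! : ℂ)⁻¹) • (z • S) ^ n = (z ^ n / n !) • S ^ n := by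
    rw [smul_pow, smul_smul, inv_mul_eq_div]
  rw [NormedSpace.exp_eq_tsum ℂ]
  refine HasSum.tsum_eq (HasSum.even_add_odd ?_ ?_)
  · simpa only [hterm, hS_even] using z.hasSum_cosh.smul_const (1 : A)
  · simpa only [hterm, hS_odd] using z.hasSum_sinh.smul_const S

section PartialTrace

variable {a b : Type*} [Fintype b]

theorem ptrace2_add (M N : Matrix (a × b) (a × b) ℂ) :
    ptrace2 (M + N) = ptrace2 M + ptrace2 N := by
  ext i j
  simp [ptrace2, Finset.sum_add_distrib]

theorem ptrace2_smul (c : ℂ) (M : Matrix (a × b) (a × b) ℂ) :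
    ptrace2 (c • M) = c • ptrace2 M := by
  ext i j
  simp [ptrace2, Finset.mul_sum]

theorem ptrace2_kronecker (A : Matrix a a ℂ) (B : Matrix b b ℂ) :
    ptrace2 (A ⊗ₖ B) = B.trace • A := by
  ext i j
  simp [ptrace2, Matrix.trace, ← Finset.mul_sum, mul_comm]

end PartialTrace

section Swap

variable {d : ℕ}

theorem swapOp_mul_apply (M : Matrix (Fin d × Fin d) (Fin d × Fin d) ℂ) (p q : Fin d × Fin d) :
    (swapOp d * M) p q = M p.swap q := by
  rw [Matrix.mul_apply, Finset.sum_eq_single p.swap]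
  · simp [swapOp]
  · intro r _ hr
    simp only [swapOp, Matrix.of_apply, ite_mul, one_mul, zero_mul, ite_eq_right_iff]
    exact fun h => absurd (Prod.ext h.2.symm h.1.symm) hr
  · simp

theorem mul_swapOp_apply (M : Matrix (Fin d × Fin d) (Fin d × Fin d) ℂ) (p q : Fin d × Fin d) :
    (M * swapOp d) p q = M p q.swap := by
  rw [Matrix.mul_apply, Finset.sum_eq_single q.swap]
  · simp [swapOp]
  · intro r _ hr
    simp only [swapOp, Matrix.of_apply, mul_ite, mul_one, mul_zero, ite_eq_right_iff]
    exact fun h => absurd (Prod.ext h.1 h.2) hr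
  · simp

theorem swapOp_mul_self : swapOp d * swapOp d = 1 := by
  ext p q
  rw [swapOp_mul_apply]
  simp [swapOp, Matrix.one_apply, Prod.ext_iff, and_comm]

variable (ρ σ : Matrix (Fin d) (Fin d) ℂ)

theorem ptrace2_swapOp_mul_kronecker : ptrace2 (swapOp d * (ρ ⊗ₖ σ)) = σ * ρ := by
  ext i j
  simp only [ptrace2, Matrix.of_apply, swapOp_mul_apply]
  simp [Matrix.mul_apply, mul_comm]

theorem ptrace2_kronecker_mul_swapOp : ptrace2 ((ρ ⊗ₖ σ) * swapOp d) = ρ * σ := by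
  ext i j
  simp only [ptrace2, Matrix.of_apply, mul_swapOp_apply]
  simp [Matrix.mul_apply]

theorem ptrace2_swapOp_conj_kronecker :
    ptrace2 (swapOp d * (ρ ⊗ₖ σ) * swapOp d) = ρ.trace • σ := by
  ext i j
  simp [ptrace2, mul_swapOp_apply, swapOp_mul_apply, Matrix.trace, ← Finset.sum_mul]

end Swap

theorem dme_single_step_exact_general (d : ℕ) (ρ σ : Matrix (Fin d) (Fin d) ℂ) (Δ : ℝ)
    (hρ1 : ρ.trace = 1) (hσ1 : σ.trace = 1) :
    ptrace2 (NormedSpace.exp ((-(Complex.I * (Δ : ℂ))) • swapOp d) * (ρ ⊗ₖ σ) *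
        NormedSpace.exp ((Complex.I * (Δ : ℂ)) • swapOp d)) =
      ((Real.cos Δ : ℂ) ^ 2) • ρ
        - (Complex.I * (Real.sin Δ : ℂ) * (Real.cos Δ : ℂ)) • (σ * ρ - ρ * σ)
        + ((Real.sin Δ : ℂ) ^ 2) • σ := by
  have hexp (t : ℝ) : NormedSpace.exp ((Complex.I * t) • swapOp d)
      = (Real.cos t : ℂ) • (1 : Matrix _ _ ℂ) + (Complex.I * Real.sin t) • swapOp d := by
    rw [NormedSpace.exp_smul_of_mul_self_eq_one swapOp_mul_self, mul_comm, Complex.cosh_mul_I,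
      Complex.sinh_mul_I, Complex.ofReal_cos, Complex.ofReal_sin, mul_comm]
  have hneg : -(Complex.I * Δ) = Complex.I * ((-Δ : ℝ) : ℂ) := by push_cast; ring
  rw [hneg, hexp, hexp, Real.cos_neg, Real.sin_neg, Complex.ofReal_neg]
  simp only [Matrix.add_mul, Matrix.mul_add, Matrix.smul_mul, Matrix.mul_smul,
    Matrix.one_mul, Matrix.mul_one, ptrace2_add, ptrace2_smul,
    ptrace2_kronecker, ptrace2_swapOp_mul_kronecker, ptrace2_kronecker_mul_swapOp,
    ptrace2_swapOp_conj_kronecker, hρ1, hσ1, one_smul]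
  match_scalars
  · ring
  · ring
  · ring
  · linear_combination -Complex.sin Δ ^ 2 * Complex.I_sq

theorem dme_single_step_exact (d : ℕ) (ρ σ : Matrix (Fin d) (Fin d) ℂ) (Δ : ℝ)
    (hρ : ρ.PosSemidef) (hρ1 : ρ.trace = 1)
    (hσ : σ.PosSemidef) (hσ1 : σ.trace = 1) :
    ptrace2 (NormedSpace.exp ((-(Complex.I * (Δ : ℂ))) • swapOp d) * (ρ ⊗ₖ σ) *
        NormedSpace.exp ((Complex.I * (Δ : ℂ)) • swapOp d)) =
      ((Real.cos Δ : ℂ) ^ 2) • ρ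
        - (Complex.I * (Real.sin Δ : ℂ) * (Real.cos Δ : ℂ)) • (σ * ρ - ρ * σ)
        + ((Real.sin Δ : ℂ) ^ 2) • σ :=
  dme_single_step_exact_general d ρ σ Δ hρ1 hσ1
end

section
/- Let ρ and σ be density matrices. Then ½‖ρ - σ‖₁ ≤ √(1 - F(ρ,σ)), where F(ρ,σ) := ‖√ρ·√σ‖₁² is the fidelity. -/
open scoped ComplexOrder

/-- The positive semidefinite square root of a positive semidefinite matrix
(removed from Mathlib; restored here with its former definition). -/
noncomputable def Matrix.PosSemidef.sqrt {𝕜 : Type*} [RCLike 𝕜] {n : Type*} [Fintype n]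
    [DecidableEq n] {A : Matrix n n 𝕜} (hA : A.PosSemidef) : Matrix n n 𝕜 :=
  hA.1.eigenvectorUnitary.1 * Matrix.diagonal ((↑) ∘ (√·) ∘ hA.1.eigenvalues) *
  (star hA.1.eigenvectorUnitary : Matrix n n 𝕜)

/-- The Schatten 1-norm (trace norm) of a complex matrix:
`‖X‖₁ = Tr[√(X Xᴴ)]`. -/
noncomputable def traceNorm {n : Type*} [Fintype n] [DecidableEq n]
    (X : Matrix n n ℂ) : ℝ :=
  ((Matrix.posSemidef_self_mul_conjTranspose X).sqrt.trace).re

/-- The fidelity `F(ρ,σ) = ‖√ρ √σ‖₁²` of two positive semidefinite matrices. -/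
noncomputable def fidelity {n : Type*} [Fintype n] [DecidableEq n]
    {ρ σ : Matrix n n ℂ} (hρ : ρ.PosSemidef) (hσ : σ.PosSemidef) : ℝ :=
  (traceNorm (hρ.sqrt * hσ.sqrt)) ^ 2

/-!
Take `A = √ρ` and `B = √σ W*`, where the unitary `W` comes from the polar decomposition of
`√ρ √σ`, so that `B B* = σ` and `Re Tr(B A*) = ‖√ρ √σ‖₁ = √F`. Then
`2 (ρ - σ) = (A - B)(A + B)* + (A + B)(A - B)*`, and pairing with the unitary `V` for which
`Tr((ρ - σ) V*) = ‖ρ - σ‖₁`, Cauchy–Schwarz for the Hilbert–Schmidt inner product gives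
`‖ρ - σ‖₁ ≤ ‖A - B‖₂ ‖A + B‖₂ = √(2 - 2√F) √(2 + 2√F) = 2 √(1 - F)`.
-/

open Matrix
open scoped InnerProductSpace MatrixOrder

theorem exists_orthonormalBasis_norm_smul_eq {𝕜 E ι : Type*} [RCLike 𝕜] [NormedAddCommGroup E]
    [InnerProductSpace 𝕜 E] [FiniteDimensional 𝕜 E] [Fintype ι]
    (card_ι : Module.finrank 𝕜 E = Fintype.card ι) {v : ι → E}
    (hv : Pairwise fun i j ↦ ⟪v i, v j⟫_𝕜 = 0) :
    ∃ b : OrthonormalBasis ι 𝕜 E, ∀ i, v i = (‖v i‖ : 𝕜) • b i := by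
  classical
  set w : ι → E := fun i ↦ (‖v i‖⁻¹ : 𝕜) • v i
  have hw : Orthonormal 𝕜 ({i | v i ≠ 0}.domRestrict w) := by
    refine ⟨fun ⟨i, hi⟩ ↦ ?_, fun ⟨i, _⟩ ⟨j, _⟩ hij ↦ ?_⟩
    · simp [w, norm_smul, inv_mul_cancel₀ (norm_ne_zero_iff.mpr hi)]
    · simp [w, inner_smul_left, inner_smul_right, hv (Subtype.coe_ne_coe.mpr hij)]
  obtain ⟨b, hb⟩ := hw.exists_orthonormalBasis_extension_of_card_eq card_ι
  refine ⟨b, fun i ↦ ?_⟩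
  by_cases hi : v i = 0
  · simp [hi]
  · rw [hb i hi, smul_smul, mul_inv_cancel₀ (by simpa using hi), one_smul]

namespace Matrix

theorem inner_toLp_row {𝕜 n : Type*} [RCLike 𝕜] [Fintype n] (Y : Matrix n n 𝕜) (i j : n) :
    ⟪WithLp.toLp 2 (Y i), WithLp.toLp 2 (Y j)⟫_𝕜 = (Y * Yᴴ) j i := by
  simp [PiLp.inner_apply, Matrix.mul_apply]

theorem norm_trace_mul_conjTranspose_le {𝕜 n : Type*} [RCLike 𝕜] [Fintype n]
    (A B : Matrix n n 𝕜) :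
    ‖(A * Bᴴ).trace‖ ≤ √(RCLike.re (A * Aᴴ).trace) * √(RCLike.re (B * Bᴴ).trace) := by
  classical
  let := toMatrixSeminormedAddCommGroup (1 : Matrix n n 𝕜) PosSemidef.one
  let := toMatrixInnerProductSpace (1 : Matrix n n 𝕜) PosSemidef.one
  have h := norm_inner_le_norm (𝕜 := 𝕜) B A
  rw [norm_eq_sqrt_re_inner (𝕜 := 𝕜) A, norm_eq_sqrt_re_inner (𝕜 := 𝕜) B] at h
  change ‖(A * 1 * Bᴴ).trace‖ ≤
    √(RCLike.re (B * 1 * Bᴴ).trace) * √(RCLike.re (A * 1 * Aᴴ).trace) at h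
  rw [mul_comm]
  simpa only [Matrix.mul_one] using h

theorem re_trace_mul_conjTranspose_nonneg {𝕜 n : Type*} [RCLike 𝕜] [Fintype n]
    (X : Matrix n n 𝕜) : 0 ≤ RCLike.re (X * Xᴴ).trace :=
  (RCLike.nonneg_iff.mp (posSemidef_self_mul_conjTranspose X).trace_nonneg).1

theorem re_trace_add_mul_conjTranspose {𝕜 n : Type*} [RCLike 𝕜] [Fintype n]
    (A B : Matrix n n 𝕜) :
    RCLike.re ((A + B) * (A + B)ᴴ).trace =
      RCLike.re (A * Aᴴ).trace + RCLike.re (B * Bᴴ).trace + 2 * RCLike.re (B * Aᴴ).trace := by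
  have : RCLike.re (A * Bᴴ).trace = RCLike.re (B * Aᴴ).trace := by
    rw [← conjTranspose_conjTranspose A, ← conjTranspose_mul, trace_conjTranspose,
      conjTranspose_conjTranspose, RCLike.star_def, RCLike.conj_re]
  simp only [conjTranspose_add, add_mul, mul_add, trace_add, map_add, this]
  ring

theorem re_trace_sub_mul_conjTranspose {𝕜 n : Type*} [RCLike 𝕜] [Fintype n]
    (A B : Matrix n n 𝕜) :
    RCLike.re ((A - B) * (A - B)ᴴ).trace =
      RCLike.re (A * Aᴴ).trace + RCLike.re (B * Bᴴ).trace - 2 * RCLike.re (B * Aᴴ).trace := by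
  simpa [sub_eq_add_neg, neg_mul, ← sub_eq_add_neg] using re_trace_add_mul_conjTranspose A (-B)

section

variable {𝕜 n : Type*} [RCLike 𝕜] [Fintype n] [DecidableEq n]

theorem PosSemidef.sqrt_eq_cfcSqrt {A : Matrix n n 𝕜} (hA : A.PosSemidef) :
    hA.sqrt = CFC.sqrt A := by
  rw [CFC.sqrt_eq_real_sqrt A hA.nonneg, cfcₙ_eq_cfc, hA.1.cfc_eq]
  simp [IsHermitian.cfc, PosSemidef.sqrt, Unitary.conjStarAlgAut_apply]

theorem PosSemidef.isHermitian_sqrt {A : Matrix n n 𝕜} (hA : A.PosSemidef) :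
    hA.sqrt.IsHermitian := by
  rw [hA.sqrt_eq_cfcSqrt]
  exact (CFC.sqrt_nonneg A).posSemidef.isHermitian

theorem PosSemidef.sqrt_mul_self {A : Matrix n n 𝕜} (hA : A.PosSemidef) :
    hA.sqrt * hA.sqrt = A := by
  rw [hA.sqrt_eq_cfcSqrt]
  exact CFC.sqrt_mul_sqrt_self A hA.nonneg

theorem exists_mem_unitaryGroup_eq_diagonal_sqrt_mul (Y : Matrix n n 𝕜) {d : n → ℝ}
    (hY : Y * Yᴴ = diagonal (fun i ↦ (d i : 𝕜))) :
    ∃ V ∈ unitaryGroup n 𝕜, Y = diagonal (fun i ↦ (√(d i) : 𝕜)) * V := by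
  obtain ⟨b, hb⟩ := exists_orthonormalBasis_norm_smul_eq (𝕜 := 𝕜)
    (v := fun i ↦ WithLp.toLp 2 (Y i)) finrank_euclideanSpace
    fun i j hij ↦ by simp [inner_toLp_row, hY, Ne.symm hij]
  have hnorm (i : n) : ‖WithLp.toLp 2 (Y i)‖ = √(d i) := by
    rw [← Real.sqrt_sq (norm_nonneg _), norm_sq_eq_re_inner (𝕜 := 𝕜), inner_toLp_row, hY]
    simp
  refine ⟨((EuclideanSpace.basisFun n 𝕜).toBasis.toMatrix b)ᵀ,
    transpose_mem_unitaryGroup_iff.mpr (OrthonormalBasis.toMatrix_orthonormalBasis_mem_unitary _ _),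
    ?_⟩
  ext i j
  have := congr($(hb i) j)
  simp_all [Module.Basis.toMatrix_apply, diagonal_mul, RCLike.real_smul_eq_coe_mul]

theorem exists_mem_unitaryGroup_eq_sqrt_mul (X : Matrix n n 𝕜) :
    ∃ V ∈ unitaryGroup n 𝕜, X = (posSemidef_self_mul_conjTranspose X).sqrt * V := by
  set hA := posSemidef_self_mul_conjTranspose X
  set U : Matrix n n 𝕜 := (hA.1.eigenvectorUnitary : Matrix n n 𝕜)
  have hU : U ∈ unitaryGroup n 𝕜 := hA.1.eigenvectorUnitary.2
  have hY : (star U * X) * (star U * X)ᴴ = diagonal (fun i ↦ (hA.1.eigenvalues i : 𝕜)) := by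
    have := hA.1.conjStarAlgAut_star_eigenvectorUnitary
    rw [Unitary.conjStarAlgAut_star_apply] at this
    rw [conjTranspose_mul, ← star_eq_conjTranspose (star U), star_star]
    simp only [Matrix.mul_assoc] at this ⊢
    exact this
  obtain ⟨V, hV, hYV⟩ := exists_mem_unitaryGroup_eq_diagonal_sqrt_mul _ hY
  refine ⟨U * V, Submonoid.mul_mem _ hU hV, ?_⟩
  calc X = U * (star U * X) := by
        rw [← Matrix.mul_assoc, (mem_unitaryGroup_iff.mp hU), Matrix.one_mul]
    _ = U * diagonal (fun i ↦ (√(hA.1.eigenvalues i) : 𝕜)) * (star U * U) * V := by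
        rw [hYV, (mem_unitaryGroup_iff'.mp hU), Matrix.mul_one, Matrix.mul_assoc]
    _ = hA.sqrt * (U * V) := by
        simp only [PosSemidef.sqrt, Matrix.mul_assoc, U]
        rfl

end

variable {n : Type*} [Fintype n] [DecidableEq n]

theorem exists_mem_unitaryGroup_re_trace_mul_star_eq_traceNorm (X : Matrix n n ℂ) :
    ∃ V ∈ unitaryGroup n ℂ, (X * star V).trace.re = traceNorm X := by
  obtain ⟨V, hV, hXV⟩ := exists_mem_unitaryGroup_eq_sqrt_mul X
  refine ⟨V, hV, ?_⟩
  conv_lhs => rw [hXV, Matrix.mul_assoc, mem_unitaryGroup_iff.mp hV, Matrix.mul_one]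
  rfl

theorem traceNorm_mul_conjTranspose_sub_le (A B : Matrix n n ℂ) :
    traceNorm (A * Aᴴ - B * Bᴴ) ≤
      √((A - B) * (A - B)ᴴ).trace.re * √((A + B) * (A + B)ᴴ).trace.re := by
  obtain ⟨V, hV, hVtr⟩ :=
    exists_mem_unitaryGroup_re_trace_mul_star_eq_traceNorm (A * Aᴴ - B * Bᴴ)
  have hpair (C D : Matrix n n ℂ) :
      (C * Dᴴ * star V).trace.re ≤ √(C * Cᴴ).trace.re * √(D * Dᴴ).trace.re := by
    have hVD : ((V * D) * (V * D)ᴴ).trace = (D * Dᴴ).trace := by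
      rw [conjTranspose_mul, ← star_eq_conjTranspose V, Matrix.mul_assoc, trace_mul_comm,
        Matrix.mul_assoc, Matrix.mul_assoc, mem_unitaryGroup_iff'.mp hV, Matrix.mul_one]
    calc (C * Dᴴ * star V).trace.re ≤ ‖(C * (V * D)ᴴ).trace‖ := by
          rw [conjTranspose_mul, ← star_eq_conjTranspose V, ← Matrix.mul_assoc]
          exact Complex.re_le_norm _
      _ ≤ √(C * Cᴴ).trace.re * √((V * D) * (V * D)ᴴ).trace.re :=
          norm_trace_mul_conjTranspose_le C (V * D)
      _ = √(C * Cᴴ).trace.re * √(D * Dᴴ).trace.re := by rw [hVD]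
  have hsplit : (A * Aᴴ - B * Bᴴ) + (A * Aᴴ - B * Bᴴ) =
      (A - B) * (A + B)ᴴ + (A + B) * (A - B)ᴴ := by
    simp only [conjTranspose_add, conjTranspose_sub]
    noncomm_ring
  have htwice : traceNorm (A * Aᴴ - B * Bᴴ) + traceNorm (A * Aᴴ - B * Bᴴ) =
      ((A - B) * (A + B)ᴴ * star V).trace.re + ((A + B) * (A - B)ᴴ * star V).trace.re := by
    rw [← hVtr, ← Complex.add_re, ← trace_add, ← add_mul, hsplit, add_mul, trace_add,
      Complex.add_re]
  linarith [hpair (A - B) (A + B), hpair (A + B) (A - B)]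

end Matrix

/-- Fuchs–van de Graaf inequality: `½‖ρ - σ‖₁ ≤ √(1 - F(ρ,σ))`. -/
theorem fuchs_van_de_graaf {n : Type*} [Fintype n] [DecidableEq n]
    {ρ σ : Matrix n n ℂ} (hρ : ρ.PosSemidef) (hρ1 : ρ.trace = 1)
    (hσ : σ.PosSemidef) (hσ1 : σ.trace = 1) :
    (1 / 2) * traceNorm (ρ - σ) ≤ Real.sqrt (1 - fidelity hρ hσ) := by
  obtain ⟨W, hW, hWtr⟩ :=
    exists_mem_unitaryGroup_re_trace_mul_star_eq_traceNorm (hρ.sqrt * hσ.sqrt)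
  set f := traceNorm (hρ.sqrt * hσ.sqrt)
  set A := hρ.sqrt
  set B := hσ.sqrt * star W
  have hA : A * Aᴴ = ρ := by rw [hρ.isHermitian_sqrt.eq, hρ.sqrt_mul_self]
  have hB : B * Bᴴ = σ := by
    rw [conjTranspose_mul, hσ.isHermitian_sqrt.eq, ← star_eq_conjTranspose, star_star,
      Matrix.mul_assoc, ← Matrix.mul_assoc (star W), mem_unitaryGroup_iff'.mp hW,
      Matrix.one_mul, hσ.sqrt_mul_self]
  have hBA : (B * Aᴴ).trace.re = f := by
    rw [hρ.isHermitian_sqrt.eq, trace_mul_cycle]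
    exact hWtr
  have hminus := re_trace_sub_mul_conjTranspose A B
  have hplus := re_trace_add_mul_conjTranspose A B
  simp only [RCLike.re_to_complex] at hminus hplus
  rw [hA, hB, hρ1, hσ1, hBA, Complex.one_re, one_add_one_eq_two] at hminus hplus
  have hbound := traceNorm_mul_conjTranspose_sub_le A B
  rw [hA, hB, hminus, hplus] at hbound
  have hplus_nonneg : 0 ≤ 2 + 2 * f := hplus ▸ re_trace_mul_conjTranspose_nonneg (A + B)
  calc 1 / 2 * traceNorm (ρ - σ) ≤ 1 / 2 * (√(2 - 2 * f) * √(2 + 2 * f)) := by gcongr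
    _ = √(1 - f ^ 2) := by
        rw [← Real.sqrt_mul' _ hplus_nonneg, show (2 - 2 * f) * (2 + 2 * f) = 2 ^ 2 * (1 - f ^ 2)
          by ring, Real.sqrt_mul (by positivity), Real.sqrt_sq zero_le_two]
        ring
end
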